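/- Let A_1,…,A_N ∈ GL_d(ℝ) and 0 < s < d, and define A_i' := |det A_i|^{1/(d−s)}(A_i⁻¹)ᵀ. Then for every finite word i over {1,…,N}, φ^{d−s}(A'_i) = φ^s(A_i), where A_i denotes the product A_{i_n}···A_{i_1} along the word. Consequently a shift-invariant measure μ is a φ^s-equilibrium state of (A_1,…,A_N) if and only if it is a φ^{d−s}-equilibrium state of (A_1',…,A_N'). -/

import Mathlib

open scoped BigOperators

/-- `sval A k` : the (k+1)-st largest singular value of `A`, i.e. the square roots of the
eigenvalues of `Aᵀ * A` listed in decreasing order (0-indexed). -/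
noncomputable def sval {d : ℕ} (A : Matrix (Fin d) (Fin d) ℝ) (k : Fin d) : ℝ :=
  (fun i => Real.sqrt ((show (A.transpose * A).IsHermitian by rw [← Matrix.conjTranspose_eq_transpose_of_trivial]; exact Matrix.isHermitian_conjTranspose_mul_self A).eigenvalues i))
    (Tuple.sort (fun i => Real.sqrt ((show (A.transpose * A).IsHermitian by rw [← Matrix.conjTranspose_eq_transpose_of_trivial]; exact Matrix.isHermitian_conjTranspose_mul_self A).eigenvalues i)) k.rev)

/-- `svalNat A k` : the k-th singular value with 0-based natural index, 0 out of range. -/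
noncomputable def svalNat {d : ℕ} (A : Matrix (Fin d) (Fin d) ℝ) (k : ℕ) : ℝ :=
  if h : k < d then sval A ⟨k, h⟩ else 0

/-- The singular value function φ^s: for 0 ≤ s ≤ d it is α_1(A)⋯α_{⌊s⌋}(A)·α_{⌈s⌉}(A)^{s-⌊s⌋},
and |det A|^{s/d} for s ≥ d. -/
noncomputable def phi {d : ℕ} (s : ℝ) (A : Matrix (Fin d) (Fin d) ℝ) : ℝ :=
  if s ≤ d then
    (∏ i ∈ Finset.range ⌊s⌋₊, svalNat A i) * (svalNat A (⌈s⌉₊ - 1)) ^ (s - (⌊s⌋₊ : ℝ))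
  else |A.det| ^ (s / (d : ℝ))

/-- The ℓ² (Euclidean) operator norm of a matrix. -/
noncomputable def opNorm {n : Type*} [Fintype n] [DecidableEq n] (A : Matrix n n ℝ) : ℝ :=
  ‖(Matrix.toEuclideanLin A).toContinuousLinearMap‖

/-- The k-th compound matrix of `A`: the matrix of the k-th exterior power `A^{∧k}` in the
orthonormal basis `e_{i₁} ∧ ⋯ ∧ e_{i_k}` (i₁ < ⋯ < i_k) of `∧^k ℝ^d` with the induced inner
product. Rows/columns are indexed by k-element subsets of `Fin d`. -/
noncomputable def compound {d : ℕ} (A : Matrix (Fin d) (Fin d) ℝ) (k : ℕ) :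
    Matrix {s : Finset (Fin d) // s.card = k} {s : Finset (Fin d) // s.card = k} ℝ :=
  fun S T => (Matrix.of fun i j : Fin k =>
    A ((S.1.orderIsoOfFin S.2 i : Fin d)) ((T.1.orderIsoOfFin T.2 j : Fin d))).det

open scoped BigOperators
open MeasureTheory

/-- The full shift space Σ_N = {1,…,N}^ℕ. -/
abbrev FullShift (N : ℕ) := ℕ → Fin N

/-- The shift map σ on Σ_N. -/
def shift {N : ℕ} : FullShift N → FullShift N := fun x n => x (n + 1)

/-- The cylinder set [w] of sequences beginning with the finite word w. -/
def cyl {N : ℕ} (w : List (Fin N)) : Set (FullShift N) :=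
  {x | ∀ k : Fin w.length, x k = w.get k}

/-- A potential Φ : Σ_N^* → (0,∞) is submultiplicative if Φ(ij) ≤ Φ(i)Φ(j). -/
def Submult {N : ℕ} (Φ : List (Fin N) → ℝ) : Prop :=
  (∀ w, 0 < Φ w) ∧ ∀ u v, Φ (u ++ v) ≤ Φ u * Φ v

/-- A potential Φ is quasimultiplicative if there are a finite set F of words and δ > 0 with
max_{k∈F} Φ(ikj) ≥ δ Φ(i)Φ(j) for all words i, j. -/
def Quasimult {N : ℕ} (Φ : List (Fin N) → ℝ) : Prop :=
  ∃ F : Finset (List (Fin N)), ∃ δ > (0 : ℝ), ∀ u v, ∃ k ∈ F, δ * (Φ u * Φ v) ≤ Φ (u ++ k ++ v)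

/-- The pressure P(Φ) = lim_n (1/n) log Σ_{|i|=n} Φ(i), which by subadditivity equals
the infimum over n ≥ 1. -/
noncomputable def pressure {N : ℕ} (Φ : List (Fin N) → ℝ) : ℝ :=
  ⨅ n : {n : ℕ // 0 < n}, (1 / (n.1 : ℝ)) * Real.log (∑ w : Fin n.1 → Fin N, Φ (List.ofFn w))

/-- The Kolmogorov–Sinai entropy of a shift-invariant measure on Σ_N, computed via the
generating partition into cylinders: h(μ) = lim_n (1/n) Σ_{|i|=n} −μ[i] log μ[i]
= inf_{n≥1} (1/n) Σ_{|i|=n} −μ[i] log μ[i]. -/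
noncomputable def entropyOf {N : ℕ} (μ : Measure (FullShift N)) : ℝ :=
  ⨅ n : {n : ℕ // 0 < n},
    (1 / (n.1 : ℝ)) * ∑ w : Fin n.1 → Fin N, Real.negMulLog ((μ (cyl (List.ofFn w))).toReal)

/-- The asymptotic average Λ(Φ,μ) = lim_n (1/n) ∫ log Φ(x|_n) dμ(x), which for
shift-invariant μ and submultiplicative Φ equals the infimum over n ≥ 1. -/
noncomputable def lyapOf {N : ℕ} (Φ : List (Fin N) → ℝ) (μ : Measure (FullShift N)) : ℝ :=
  ⨅ n : {n : ℕ // 0 < n},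
    (1 / (n.1 : ℝ)) * ∫ x, Real.log (Φ (List.ofFn fun k : Fin n.1 => x k)) ∂μ

/-- μ is an equilibrium state of Φ if P(Φ) = h(μ) + Λ(Φ,μ). -/
def IsEqState {N : ℕ} (Φ : List (Fin N) → ℝ) (μ : Measure (FullShift N)) : Prop :=
  pressure Φ = entropyOf μ + lyapOf Φ μ

/-- The matrix product A_w = A_{i_n} ⋯ A_{i_1} along a word w = (i_1, …, i_n). -/
noncomputable def wprod {N d : ℕ} (A : Fin N → Matrix (Fin d) (Fin d) ℝ)
    (w : List (Fin N)) : Matrix (Fin d) (Fin d) ℝ :=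
  ((w.map A).reverse).prod

/-- μ is a φ^t-equilibrium state of the tuple A = (A_1,…,A_N): μ is a shift-invariant
probability measure maximizing h(ν) + Λ(φ^t ∘ A, ν) over shift-invariant probability
measures ν. -/
def IsPhiEqState {N d : ℕ} (A : Fin N → Matrix (Fin d) (Fin d) ℝ) (t : ℝ)
    (μ : Measure (FullShift N)) : Prop :=
  μ.map shift = μ ∧ IsProbabilityMeasure μ ∧
    ∀ ν : Measure (FullShift N), ν.map shift = ν → IsProbabilityMeasure ν →
      entropyOf ν + lyapOf (fun w => phi t (wprod A w)) ν ≤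
        entropyOf μ + lyapOf (fun w => phi t (wprod A w)) μ



section AuxDual

open Matrix Polynomial

variable {n : Type*} [Fintype n] [DecidableEq n]

lemma my_charmatrix_conj (U D : Matrix n n ℝ) (hU : IsUnit U.det) :
    charmatrix (U * D * U⁻¹) = U.map C * charmatrix D * U⁻¹.map C := by
  have hUU : U * U⁻¹ = 1 := mul_nonsing_inv U hU
  have hmap : ∀ X Y : Matrix n n ℝ, (X * Y).map (C : ℝ →+* ℝ[X]) = X.map C * Y.map C := by
    intro X Y; exact Matrix.map_mul
  unfold charmatrix
  rw [mul_sub, sub_mul]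
  congr 1
  · rw [← (Matrix.scalar_commute (X : ℝ[X]) (fun r' => Commute.all _ _) (U.map C)).eq, mul_assoc,
      ← hmap, hUU]
    simp
  · simp only [RingHom.mapMatrix_apply, ← hmap]

lemma my_charpoly_conj (U D : Matrix n n ℝ) (hU : IsUnit U.det) :
    (U * D * U⁻¹).charpoly = D.charpoly := by
  rw [Matrix.charpoly, my_charmatrix_conj U D hU, det_mul, det_mul, Matrix.charpoly]
  have h1 : (U.map (C : ℝ →+* ℝ[X])).det = C U.det := by
    rw [show U.map (C : ℝ →+* ℝ[X]) = (C : ℝ →+* ℝ[X]).mapMatrix U from rfl, ← RingHom.map_det]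
  have h2 : (U⁻¹.map (C : ℝ →+* ℝ[X])).det = C U⁻¹.det := by
    rw [show U⁻¹.map (C : ℝ →+* ℝ[X]) = (C : ℝ →+* ℝ[X]).mapMatrix U⁻¹ from rfl, ← RingHom.map_det]
  rw [h1, h2]
  rw [mul_comm, ← mul_assoc, ← _root_.map_mul, ← det_mul, nonsing_inv_mul U hU, det_one,
    _root_.map_one, one_mul]

lemma my_charpoly_diagonal (f : n → ℝ) :
    (diagonal f).charpoly = ∏ i, (X - C (f i)) := by
  have : charmatrix (diagonal f) = diagonal fun i => (X : ℝ[X]) - C (f i) := by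
    ext i j
    rcases eq_or_ne i j with rfl | h
    · simp [charmatrix_apply_eq]
    · simp [charmatrix_apply_ne _ _ _ h, diagonal_apply_ne _ h]
  rw [Matrix.charpoly, this, det_diagonal]

lemma my_eig_multiset {M : Matrix n n ℝ} (hM : M.IsHermitian) (U : Matrix n n ℝ) (f : n → ℝ)
    (hU : IsUnit U.det) (h : M = U * diagonal f * U⁻¹) :
    Multiset.map hM.eigenvalues Finset.univ.val = Multiset.map f Finset.univ.val := by
  have key : ∀ (V : Matrix n n ℝ) (g : n → ℝ), IsUnit V.det → M = V * diagonal g * V⁻¹ →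
      M.charpoly = ((Multiset.map g Finset.univ.val).map (fun a => X - C a)).prod := by
    intro V g hV hVg
    rw [hVg, my_charpoly_conj V _ hV, my_charpoly_diagonal]
    rw [Finset.prod, Multiset.map_map]
    rfl
  -- spectral theorem gives the eigenvalue version
  set V : Matrix n n ℝ := (hM.eigenvectorUnitary : Matrix n n ℝ) with hVdef
  have hVU : V * star V = 1 := (Matrix.mem_unitaryGroup_iff).mp hM.eigenvectorUnitary.2
  have hVdet : IsUnit V.det := by
    apply IsUnit.of_mul_eq_one (star V).det
    rw [← det_mul, hVU, det_one]
  have hVinv : V⁻¹ = star V := inv_eq_right_inv hVU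
  have hspec : M = V * diagonal hM.eigenvalues * V⁻¹ := by
    rw [hVinv]
    convert hM.spectral_theorem using 1
    rw [Unitary.conjStarAlgAut_apply]
    simp [V]
  have h1 := key V hM.eigenvalues hVdet hspec
  have h2 := key U f hU h
  have := h1.symm.trans h2
  have hr := congrArg Polynomial.roots this
  rwa [Polynomial.roots_multiset_prod_X_sub_C, Polynomial.roots_multiset_prod_X_sub_C] at hr

lemma perm_map_univ {α β : Type*} [Fintype α] [DecidableEq α] (σ : Equiv.Perm α) (F : α → β) :
    Multiset.map (fun k => F (σ k)) Finset.univ.val = Multiset.map F Finset.univ.val := by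
  have h : Multiset.map (⇑σ) Finset.univ.val = Finset.univ.val := by
    have := congrArg Finset.val (Finset.map_univ_equiv σ)
    simpa [Finset.map_val] using this
  calc Multiset.map (fun k => F (σ k)) Finset.univ.val
      = Multiset.map F (Multiset.map (⇑σ) Finset.univ.val) := by rw [Multiset.map_map]; rfl
    _ = Multiset.map F Finset.univ.val := by rw [h]

lemma sval_eq_comp {d : ℕ} (A : Matrix (Fin d) (Fin d) ℝ) :
    sval A = (fun i => Real.sqrt ((Matrix.isHermitian_conjTranspose_mul_self A).eigenvalues i)) ∘
      (Tuple.sort fun i => Real.sqrt ((Matrix.isHermitian_conjTranspose_mul_self A).eigenvalues i)) ∘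
      Fin.rev := rfl

lemma sval_multiset {d : ℕ} (A : Matrix (Fin d) (Fin d) ℝ) :
    Multiset.map (sval A) Finset.univ.val =
      Multiset.map (fun i => Real.sqrt ((Matrix.isHermitian_conjTranspose_mul_self A).eigenvalues i))
        Finset.univ.val := by
  set h := fun i => Real.sqrt ((Matrix.isHermitian_conjTranspose_mul_self A).eigenvalues i)
  calc Multiset.map (sval A) Finset.univ.val
      = Multiset.map (fun k => (h ∘ Tuple.sort h) (Fin.revPerm k)) Finset.univ.val := rfl
    _ = Multiset.map (h ∘ Tuple.sort h) Finset.univ.val := perm_map_univ _ _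
    _ = Multiset.map (fun k => h (Tuple.sort h k)) Finset.univ.val := rfl
    _ = Multiset.map h Finset.univ.val := perm_map_univ _ _

lemma sval_antitone {d : ℕ} (A : Matrix (Fin d) (Fin d) ℝ) : Antitone (sval A) := by
  set h := fun i => Real.sqrt ((Matrix.isHermitian_conjTranspose_mul_self A).eigenvalues i) with hh
  intro k l hkl
  exact Tuple.monotone_sort h (Fin.rev_le_rev.mpr hkl)

lemma monotone_eq_of_multiset {d : ℕ} (f g : Fin d → ℝ) (hf : Monotone f) (hg : Monotone g)
    (h : Multiset.map f Finset.univ.val = Multiset.map g Finset.univ.val) : f = g := by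
  have huniv : (Finset.univ : Finset (Fin d)).val = ↑(List.finRange d) := by
    rw [Fin.univ_def]
  rw [huniv] at h
  have h' : (List.ofFn f : Multiset ℝ) = (List.ofFn g : Multiset ℝ) := by
    rw [List.ofFn_eq_map, List.ofFn_eq_map]
    simpa [Multiset.map_coe] using h
  exact List.ofFn_injective <| List.Perm.eq_of_sortedLE hf.sortedLE_ofFn hg.sortedLE_ofFn
    (Multiset.coe_eq_coe.mp h')

lemma herm_spectral {M : Matrix n n ℝ} (hM : M.IsHermitian) :
    ∃ V : Matrix n n ℝ, IsUnit V.det ∧ M = V * diagonal hM.eigenvalues * V⁻¹ := by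
  set V : Matrix n n ℝ := (hM.eigenvectorUnitary : Matrix n n ℝ) with hVdef
  have hVU : V * star V = 1 := (Matrix.mem_unitaryGroup_iff).mp hM.eigenvectorUnitary.2
  have hVdet : IsUnit V.det := by
    apply IsUnit.of_mul_eq_one (star V).det
    rw [← det_mul, hVU, det_one]
  have hVinv : V⁻¹ = star V := inv_eq_right_inv hVU
  refine ⟨V, hVdet, ?_⟩
  rw [hVinv]
  convert hM.spectral_theorem using 1
  rw [Unitary.conjStarAlgAut_apply]
  simp [V]

lemma conjT_eq_transpose {m k : Type*} (X : Matrix m k ℝ) : Xᴴ = Xᵀ := by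
  ext i j; simp [Matrix.conjTranspose_apply]

lemma eig_pos_of_unit {d : ℕ} (B : Matrix (Fin d) (Fin d) ℝ) (hB : IsUnit B.det) (i : Fin d) :
    0 < (Matrix.isHermitian_conjTranspose_mul_self B).eigenvalues i := by
  rcases lt_or_eq_of_le (Matrix.eigenvalues_conjTranspose_mul_self_nonneg B i) with h | h
  · exact h
  exfalso
  have hdet : (Bᴴ * B).det = B.det * B.det := by
    rw [det_mul, det_conjTranspose, star_trivial]
  have hprod := (Matrix.isHermitian_conjTranspose_mul_self B).det_eq_prod_eigenvalues
  rw [hdet] at hprod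
  have : (B.det * B.det : ℝ) ≠ 0 := mul_ne_zero hB.ne_zero hB.ne_zero
  rw [hprod] at this
  exact this (Finset.prod_eq_zero (Finset.mem_univ i) (by exact_mod_cast h.symm))

lemma sval_pos {d : ℕ} (B : Matrix (Fin d) (Fin d) ℝ) (hB : IsUnit B.det) (k : Fin d) :
    0 < sval B k :=
  Real.sqrt_pos.mpr (eig_pos_of_unit B hB _)

lemma sval_dual {d : ℕ} (B : Matrix (Fin d) (Fin d) ℝ) (hB : IsUnit B.det)
    (c : ℝ) (hc : 0 < c) (k : Fin d) :
    sval (c • B⁻¹ᵀ) k = c * (sval B k.rev)⁻¹ := by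
  set μ := (Matrix.isHermitian_conjTranspose_mul_self B).eigenvalues with hμ
  set B' := c • B⁻¹ᵀ with hB'
  set μ' := (Matrix.isHermitian_conjTranspose_mul_self B').eigenvalues with hμ'
  have hμpos : ∀ i, 0 < μ i := eig_pos_of_unit B hB
  -- M' = c² • M⁻¹
  have hM' : B'ᴴ * B' = (c ^ 2) • (Bᴴ * B)⁻¹ := by
    have h1 : B'ᴴ = c • B⁻¹ := by
      rw [hB', conjTranspose_smul, star_trivial, conjT_eq_transpose, transpose_transpose]
    have h2 : (Bᴴ * B)⁻¹ = B⁻¹ * B⁻¹ᵀ := by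
      rw [conjT_eq_transpose, Matrix.mul_inv_rev, Matrix.transpose_nonsing_inv]
    rw [h1, h2, smul_mul_assoc, Matrix.mul_smul, smul_smul, ← sq]
  -- spectral decomposition
  obtain ⟨V, hVdet, hspec⟩ := herm_spectral (Matrix.isHermitian_conjTranspose_mul_self B)
  have hMinv : (Bᴴ * B)⁻¹ = V * diagonal (fun i => (μ i)⁻¹) * V⁻¹ := by
    have hdiag : (diagonal μ)⁻¹ = diagonal (fun i => (μ i)⁻¹) := by
      apply Matrix.inv_eq_right_inv
      rw [Matrix.diagonal_mul_diagonal]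
      ext i j
      rcases eq_or_ne i j with rfl | h
      · simp [mul_inv_cancel₀ (hμpos i).ne']
      · simp [Matrix.diagonal_apply_ne _ h, Matrix.one_apply_ne h]
    rw [hspec, Matrix.mul_inv_rev, Matrix.mul_inv_rev, Matrix.nonsing_inv_nonsing_inv V hVdet,
      hdiag, ← mul_assoc]
  have hconj : B'ᴴ * B' = V * diagonal (fun i => c ^ 2 * (μ i)⁻¹) * V⁻¹ := by
    rw [hM', hMinv, ← smul_mul_assoc, ← mul_smul_comm]
    congr 1
    congr 1
    ext i j
    simp only [Matrix.smul_apply, Matrix.diagonal_apply, smul_eq_mul, mul_ite, mul_zero]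
  have hmul := my_eig_multiset (Matrix.isHermitian_conjTranspose_mul_self B') V
    (fun i => c ^ 2 * (μ i)⁻¹) hVdet hconj
  -- the two monotone tuples
  have hf1 : (fun j => sval B' (Fin.rev j)) = (fun i => Real.sqrt (μ' i)) ∘
      (Tuple.sort fun i => Real.sqrt (μ' i)) := by
    funext j
    simp only [sval, Fin.rev_rev, hμ']
    rfl
  have hf1mono : Monotone fun j => sval B' (Fin.rev j) := by
    rw [hf1]; exact Tuple.monotone_sort _
  have hg1mono : Monotone fun j => c * (sval B j)⁻¹ := by
    intro j l hjl
    have h1 : 0 < sval B l := sval_pos B hB l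
    exact mul_le_mul_of_nonneg_left
      (inv_anti₀ h1 (sval_antitone B hjl)) hc.le
  -- multiset equality
  have hms : Multiset.map (fun j => sval B' (Fin.rev j)) Finset.univ.val =
      Multiset.map (fun j => c * (sval B j)⁻¹) Finset.univ.val := by
    calc Multiset.map (fun j => sval B' (Fin.rev j)) Finset.univ.val
        = Multiset.map (fun j => sval B' (Fin.revPerm j)) Finset.univ.val := rfl
      _ = Multiset.map (sval B') Finset.univ.val := perm_map_univ _ _
      _ = Multiset.map (fun i => Real.sqrt (μ' i)) Finset.univ.val := sval_multiset B'
      _ = Multiset.map Real.sqrt (Multiset.map μ' Finset.univ.val) := by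
          rw [Multiset.map_map]; rfl
      _ = Multiset.map Real.sqrt
            (Multiset.map (fun i => c ^ 2 * (μ i)⁻¹) Finset.univ.val) := by rw [hmul]
      _ = Multiset.map (fun i => Real.sqrt (c ^ 2 * (μ i)⁻¹)) Finset.univ.val := by
          rw [Multiset.map_map]; rfl
      _ = Multiset.map (fun i => c * (Real.sqrt (μ i))⁻¹) Finset.univ.val := by
          apply Multiset.map_congr rfl
          intro i _
          rw [Real.sqrt_mul (sq_nonneg c), Real.sqrt_inv, Real.sqrt_sq hc.le]
      _ = Multiset.map (fun x => c * x⁻¹)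
            (Multiset.map (fun i => Real.sqrt (μ i)) Finset.univ.val) := by
          rw [Multiset.map_map]; rfl
      _ = Multiset.map (fun x => c * x⁻¹) (Multiset.map (sval B) Finset.univ.val) := by
          rw [sval_multiset B]
      _ = Multiset.map (fun j => c * (sval B j)⁻¹) Finset.univ.val := by
          rw [Multiset.map_map]; rfl
  have := monotone_eq_of_multiset _ _ hf1mono hg1mono hms
  have hk := congrFun this k.rev
  simpa [Fin.rev_rev] using hk

lemma prod_svalNat {d : ℕ} (B : Matrix (Fin d) (Fin d) ℝ) (hB : IsUnit B.det) :
    ∏ k ∈ Finset.range d, svalNat B k = |B.det| := by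
  set μ := (Matrix.isHermitian_conjTranspose_mul_self B).eigenvalues with hμ
  have h1 : ∏ k ∈ Finset.range d, svalNat B k = ∏ k : Fin d, sval B k := by
    rw [← Fin.prod_univ_eq_prod_range]
    apply Finset.prod_congr rfl
    intro i _
    rw [svalNat, dif_pos i.isLt]
  have h2 : ∏ k : Fin d, sval B k = ∏ i : Fin d, Real.sqrt (μ i) := by
    rw [Finset.prod, Finset.prod, sval_multiset B]
  have h3 : ∀ s : Finset (Fin d), ∏ i ∈ s, Real.sqrt (μ i) = Real.sqrt (∏ i ∈ s, μ i) := by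
    intro s
    induction s using Finset.induction with
    | empty => simp
    | @insert a s ha ih =>
        rw [Finset.prod_insert ha, Finset.prod_insert ha, ih,
          ← Real.sqrt_mul (eig_pos_of_unit B hB a).le]
  have h4 : ∏ i : Fin d, μ i = B.det ^ 2 := by
    have := (Matrix.isHermitian_conjTranspose_mul_self B).det_eq_prod_eigenvalues
    rw [det_mul, det_conjTranspose, star_trivial, ← sq] at this
    exact this.symm
  rw [h1, h2, h3, h4, Real.sqrt_sq_eq_abs]

lemma svalNat_dual {d : ℕ} (B : Matrix (Fin d) (Fin d) ℝ) (hB : IsUnit B.det)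
    (c : ℝ) (hc : 0 < c) (k : ℕ) (hk : k < d) :
    svalNat (c • B⁻¹ᵀ) k = c * (svalNat B (d - 1 - k))⁻¹ := by
  have h2 : d - 1 - k < d := by omega
  rw [svalNat, dif_pos hk, svalNat, dif_pos h2, sval_dual B hB c hc]
  have hrev : (⟨k, hk⟩ : Fin d).rev = ⟨d - 1 - k, h2⟩ := by
    apply Fin.ext; rw [Fin.val_rev]; show d - (k + 1) = d - 1 - k; omega
  rw [hrev]

lemma svalNat_pos {d : ℕ} (B : Matrix (Fin d) (Fin d) ℝ) (hB : IsUnit B.det)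
    (k : ℕ) (hk : k < d) : 0 < svalNat B k := by
  rw [svalNat, dif_pos hk]; exact sval_pos B hB _

lemma prod_reflect (f : ℕ → ℝ) (d K : ℕ) (hK : K ≤ d) :
    ∏ i ∈ Finset.range K, f (d - 1 - i) = ∏ j ∈ Finset.Ico (d - K) d, f j := by
  apply Finset.prod_nbij' (fun i => d - 1 - i) (fun j => d - 1 - j)
  · intro i hi; simp only [Finset.mem_range] at hi; simp only [Finset.mem_Ico]; omega
  · intro j hj; simp only [Finset.mem_Ico] at hj; simp only [Finset.mem_range]; omega
  · intro i hi; simp only [Finset.mem_range] at hi; omega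
  · intro j hj; simp only [Finset.mem_Ico] at hj; omega
  · intro i hi; rfl

lemma phi_dual {d : ℕ} (B : Matrix (Fin d) (Fin d) ℝ) (hB : IsUnit B.det)
    (s : ℝ) (hs0 : 0 < s) (hsd : s < d) :
    phi ((d:ℝ) - s) ((|B.det| ^ (1/((d:ℝ)-s))) • B⁻¹ᵀ) = phi s B := by
  set t : ℝ := (d:ℝ) - s with htdef
  have ht0 : 0 < t := by rw [htdef]; linarith
  have htd : t ≤ (d:ℝ) := by rw [htdef]; linarith
  have hdet0 : (0:ℝ) < |B.det| := abs_pos.mpr hB.ne_zero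
  set c : ℝ := |B.det| ^ (1/t) with hcdef
  have hc : 0 < c := Real.rpow_pos_of_pos hdet0 _
  have hct : c ^ t = |B.det| := by
    rw [hcdef, ← Real.rpow_mul hdet0.le, one_div_mul_cancel ht0.ne', Real.rpow_one]
  set lam := svalNat B with hlamdef
  set B' : Matrix (Fin d) (Fin d) ℝ := c • B⁻¹ᵀ with hB'def
  have hlam' : ∀ k, k < d → svalNat B' k = c * (lam (d-1-k))⁻¹ :=
    fun k hk => svalNat_dual B hB c hc k hk
  have hlampos : ∀ k, k < d → 0 < lam k := svalNat_pos B hB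
  have hdetprod : ∏ k ∈ Finset.range d, lam k = |B.det| := prod_svalNat B hB
  set m := ⌊s⌋₊ with hmdef
  have hmle : (m:ℝ) ≤ s := Nat.floor_le hs0.le
  have hslt : s < (m:ℝ) + 1 := Nat.lt_floor_add_one s
  have hmd : m < d := by exact_mod_cast lt_of_le_of_lt hmle hsd
  have hprod' : ∀ K, K ≤ d → ∏ i ∈ Finset.range K, svalNat B' i =
      c ^ ((K:ℕ):ℝ) * (∏ j ∈ Finset.Ico (d-K) d, lam j)⁻¹ := by
    intro K hK
    calc ∏ i ∈ Finset.range K, svalNat B' i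
        = ∏ i ∈ Finset.range K, c * (lam (d-1-i))⁻¹ := by
          apply Finset.prod_congr rfl
          intro i hi
          exact hlam' i (by simp only [Finset.mem_range] at hi; omega)
      _ = c ^ K * ∏ i ∈ Finset.range K, (lam (d-1-i))⁻¹ := by
          rw [Finset.prod_mul_distrib, Finset.prod_const, Finset.card_range]
      _ = c ^ K * ∏ j ∈ Finset.Ico (d-K) d, (lam j)⁻¹ := by
          rw [prod_reflect (fun j => (lam j)⁻¹) d K hK]
      _ = c ^ ((K:ℕ):ℝ) * (∏ j ∈ Finset.Ico (d-K) d, lam j)⁻¹ := by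
          rw [Finset.prod_inv_distrib, Real.rpow_natCast]
  have hIcopos : ∀ a, 0 < ∏ j ∈ Finset.Ico a d, lam j := by
    intro a
    apply Finset.prod_pos
    intro j hj
    exact hlampos j (Finset.mem_Ico.mp hj).2
  rcases eq_or_lt_of_le hmle with hint | hfrac
  · -- integer case : s = m
    have hm1 : 1 ≤ m := by
      by_contra h
      push_neg at h
      interval_cases m
      simp at hint
      linarith
    have hs_eq : s = (m:ℝ) := hint.symm
    have ht_eq : t = ((d - m : ℕ) : ℝ) := by
      rw [htdef, hs_eq, Nat.cast_sub hmd.le]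
    have hceil : ⌈s⌉₊ = m := by rw [hs_eq, Nat.ceil_natCast]
    have hfloor_t : ⌊t⌋₊ = d - m := by rw [ht_eq, Nat.floor_natCast]
    have hceil_t : ⌈t⌉₊ = d - m := by rw [ht_eq, Nat.ceil_natCast]
    rw [phi, phi, if_pos htd, if_pos hsd.le, hceil, hfloor_t, hceil_t]
    rw [show s - (m:ℝ) = 0 by rw [hs_eq]; ring, Real.rpow_zero, mul_one]
    rw [show t - ((d - m : ℕ):ℝ) = 0 by rw [ht_eq]; ring, Real.rpow_zero, mul_one]
    rw [hprod' (d - m) (by omega)]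
    rw [show d - (d - m) = m by omega]
    rw [show ((d - m : ℕ):ℝ) = t from ht_eq.symm, hct, ← hdetprod,
      ← Finset.prod_range_mul_prod_Ico lam hmd.le]
    field_simp
    rw [mul_div_assoc, div_self (hIcopos m).ne', mul_one]
  · -- fractional case : m < s
    have hceil : ⌈s⌉₊ = m + 1 := by
      rw [Nat.ceil_eq_iff (by omega)]
      constructor
      · simpa using hfrac
      · push_cast; linarith
    have hm1d : m + 1 ≤ d := by omega
    have hKcast : ((d - m - 1 : ℕ) : ℝ) = (d:ℝ) - m - 1 := by
      push_cast [Nat.cast_sub (by omega : 1 ≤ d - m), Nat.cast_sub hmd.le]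
      ring
    have hfloor_t : ⌊t⌋₊ = d - m - 1 := by
      rw [Nat.floor_eq_iff ht0.le]
      rw [hKcast]
      constructor
      · rw [htdef]; linarith
      · rw [htdef]; linarith
    have hceil_t : ⌈t⌉₊ = d - m := by
      rw [Nat.ceil_eq_iff (by omega)]
      constructor
      · rw [show (d - m - 1 : ℕ) = d - m - 1 from rfl, hKcast, htdef]; linarith
      · rw [Nat.cast_sub hmd.le, htdef]; linarith
    rw [phi, phi, if_pos htd, if_pos hsd.le, hceil, hfloor_t, hceil_t, Nat.add_sub_cancel]
    rw [hprod' (d - m - 1) (by omega)]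
    rw [show d - (d - m - 1) = m + 1 by omega]
    rw [hlam' (d - m - 1) (by omega)]
    rw [show d - 1 - (d - m - 1) = m by omega]
    set e : ℝ := t - ((d - m - 1 : ℕ):ℝ) with hedef
    have he : e = (m:ℝ) + 1 - s := by rw [hedef, hKcast, htdef]; ring
    have hlm : 0 < lam m := hlampos m hmd
    have hmulpow : (c * (lam m)⁻¹) ^ e = c ^ e * ((lam m) ^ e)⁻¹ := by
      rw [Real.mul_rpow hc.le (inv_nonneg.mpr hlm.le), Real.inv_rpow hlm.le]
    rw [hmulpow]
    have hce : c ^ ((d - m - 1 : ℕ):ℝ) * c ^ e = |B.det| := by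
      rw [← Real.rpow_add hc, hedef]
      rw [show ((d - m - 1:ℕ):ℝ) + (t - ((d - m - 1:ℕ):ℝ)) = t by ring, hct]
    have hpow_split : (lam m) ^ (s - (m:ℝ)) = lam m * ((lam m) ^ e)⁻¹ := by
      rw [he, show s - (m:ℝ) = 1 - ((m:ℝ) + 1 - s) by ring,
        Real.rpow_sub hlm, Real.rpow_one]
      rw [div_eq_mul_inv]
    rw [hpow_split]
    have hsplit : ∏ k ∈ Finset.range d, lam k =
        (∏ k ∈ Finset.range m, lam k) * lam m * ∏ j ∈ Finset.Ico (m+1) d, lam j := by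
      rw [← Finset.prod_range_succ, Finset.prod_range_mul_prod_Ico lam hm1d]
    have hIco : (0:ℝ) < ∏ j ∈ Finset.Ico (m+1) d, lam j := hIcopos _
    have hdet' : |B.det| = (∏ k ∈ Finset.range m, lam k) * lam m *
        ∏ j ∈ Finset.Ico (m+1) d, lam j := by rw [← hdetprod, hsplit]
    have hppos : (0:ℝ) < (lam m) ^ e := Real.rpow_pos_of_pos hlm e
    rw [show c ^ ((d-m-1:ℕ):ℝ) * (∏ j ∈ Finset.Ico (m+1) d, lam j)⁻¹ * (c ^ e * (lam m ^ e)⁻¹)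
        = (c ^ ((d-m-1:ℕ):ℝ) * c ^ e) * (∏ j ∈ Finset.Ico (m+1) d, lam j)⁻¹ * (lam m ^ e)⁻¹
        from by ring, hce, hdet']
    field_simp
    rfl

lemma wprod_cons {N d : ℕ} (A : Fin N → Matrix (Fin d) (Fin d) ℝ) (a : Fin N)
    (w : List (Fin N)) : wprod A (a :: w) = wprod A w * A a := by
  simp [wprod]

lemma wprod_det_isUnit {N d : ℕ} (A : Fin N → Matrix (Fin d) (Fin d) ℝ)
    (hA : ∀ i, IsUnit (A i).det) : ∀ w, IsUnit (wprod A w).det := by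
  intro w
  induction w with
  | nil => simp [wprod]
  | cons a w ih => rw [wprod_cons, det_mul]; exact ih.mul (hA a)

lemma wprod_dual {N d : ℕ} (A : Fin N → Matrix (Fin d) (Fin d) ℝ)
    (t : ℝ) (w : List (Fin N)) :
    wprod (fun i => (|(A i).det| ^ (1/t)) • ((A i)⁻¹)ᵀ) w
      = (|(wprod A w).det| ^ (1/t)) • ((wprod A w)⁻¹)ᵀ := by
  induction w with
  | nil => simp [wprod]
  | cons a w ih =>
      rw [wprod_cons, wprod_cons, ih, smul_mul_assoc, mul_smul_comm, smul_smul, det_mul,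
        abs_mul, Real.mul_rpow (abs_nonneg _) (abs_nonneg _), Matrix.mul_inv_rev,
        Matrix.transpose_mul]

end AuxDual

open Matrix in
/-- with A_i' := |det A_i|^{1/(d−s)} (A_i⁻¹)ᵀ one has
φ^{d−s}(A'_w) = φ^s(A_w) for every word w, and consequently μ is a φ^s-equilibrium state of
(A_1,…,A_N) iff it is a φ^{d−s}-equilibrium state of (A_1',…,A_N'). -/
theorem phi_eqStates_dual
    {N d : ℕ} (A : Fin N → Matrix (Fin d) (Fin d) ℝ) (hA : ∀ i, IsUnit (A i).det)
    (s : ℝ) (hs0 : 0 < s) (hsd : s < d) :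
    (∀ w : List (Fin N),
      phi ((d : ℝ) - s)
        (wprod (fun i => (|(A i).det| ^ (1 / ((d : ℝ) - s))) • ((A i)⁻¹)ᵀ) w) =
      phi s (wprod A w)) ∧
    (∀ μ : Measure (FullShift N),
      IsPhiEqState A s μ ↔
        IsPhiEqState (fun i => (|(A i).det| ^ (1 / ((d : ℝ) - s))) • ((A i)⁻¹)ᵀ)
          ((d : ℝ) - s) μ) := by
  have ht0 : (0:ℝ) < (d:ℝ) - s := by linarith
  have hpart1 : ∀ w : List (Fin N),
      phi ((d : ℝ) - s)
        (wprod (fun i => (|(A i).det| ^ (1 / ((d : ℝ) - s))) • ((A i)⁻¹)ᵀ) w) =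
      phi s (wprod A w) := by
    intro w
    rw [wprod_dual A ((d:ℝ) - s) w]
    exact phi_dual (wprod A w) (wprod_det_isUnit A hA w) s hs0 hsd
  refine ⟨hpart1, ?_⟩
  intro μ
  have hfun : (fun w => phi ((d:ℝ) - s)
      (wprod (fun i => (|(A i).det| ^ (1 / ((d : ℝ) - s))) • ((A i)⁻¹)ᵀ) w))
      = fun w => phi s (wprod A w) := funext hpart1
  unfold IsPhiEqState
  rw [hfun]
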